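/- arXiv:1506.05571 — 3 statements merged into one kernel-verified Lean document; each statement's English description precedes it below -/
import Mathlib

section
/- For a critical or sub-critical Galton-Watson process (m ≤ 1) whose offspring distribution p satisfies 0 < p(0) < 1 and p(0)+p(1) < 1, extinction occurs almost surely: P(∃ n ∈ ℕ such that Z_n = 0) = 1. -/
/-!
Let `g` be the generating function of `p`. Independence of the offspring counts gives
`E[s ^ Z (n+1) | Z n] = g s ^ Z n`, hence `P(Z n = 0) = g^[n] 0`. The extinction events increase
with `n`, so the extinction probability is `⨆ n, g^[n] 0`, which by Kleene's theorem is the least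
fixed point of `g` on `[0, ∞]`. It equals `1`: `g 1 = 1`, and `g` has no fixed point below `1`
because `1 - g s = ∑ p k (1 - s ^ k) < ∑ k p k (1 - s) ≤ 1 - s` for `s < 1`, the strict inequality
coming from `1 - s ^ k < k (1 - s)` for `k ≥ 2` and `p 0 + p 1 < 1`.
-/

open MeasureTheory ProbabilityTheory Filter Set
open scoped ENNReal

noncomputable section

namespace GWPaper

/-- The Galton-Watson process built from the array `ζ = (ζ_{i,n}; i ∈ ℕ, n ∈ ℕ)`:
`Z 0 = 1` and `Z n = ∑_{i=1}^{Z (n-1)} ζ_{i, n}` for `n ≥ 1` (empty sum = 0). -/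
def gwZ {Ω : Type*} (ζ : ℕ × ℕ → Ω → ℕ) : ℕ → Ω → ℕ
  | 0 => fun _ => 1
  | n + 1 => fun ω => ∑ i ∈ Finset.range (gwZ ζ n ω), ζ (i, n + 1) ω

theorem Real.one_sub_pow_lt_mul_one_sub {t : ℝ} (ht0 : 0 ≤ t) (ht1 : t < 1) {k : ℕ}
    (hk : 2 ≤ k) : 1 - t ^ k < k * (1 - t) := by
  induction k, hk using Nat.le_induction with
  | base => push_cast; nlinarith
  | succ k _ ih =>
    have : t ^ k ≤ 1 := pow_le_one₀ ht0 ht1.le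
    push_cast
    nlinarith [pow_succ t k]

theorem ENNReal.toReal_one_sub {s : ℝ≥0∞} (hs : s ≤ 1) : (1 - s).toReal = 1 - s.toReal := by
  rw [ENNReal.toReal_sub_of_le hs ENNReal.one_ne_top, ENNReal.toReal_one]

theorem ENNReal.one_sub_pow_le_mul_one_sub {s : ℝ≥0∞} (hs : s ≤ 1) (k : ℕ) :
    1 - s ^ k ≤ k * (1 - s) := by
  have hsk : s ^ k ≤ 1 := pow_le_one₀ zero_le hs
  rw [← ENNReal.toReal_le_toReal (by finiteness) (by finiteness), ENNReal.toReal_mul,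
    ENNReal.toReal_one_sub hsk, ENNReal.toReal_one_sub hs, ENNReal.toReal_pow,
    ENNReal.toReal_natCast]
  have := one_add_mul_sub_le_pow (a := s.toReal) (by linarith [ENNReal.toReal_nonneg (a := s)]) k
  linarith

theorem ENNReal.one_sub_pow_lt_mul_one_sub {s : ℝ≥0∞} (hs : s < 1) {k : ℕ} (hk : 2 ≤ k) :
    1 - s ^ k < k * (1 - s) := by
  have hsk : s ^ k ≤ 1 := pow_le_one₀ zero_le hs.le
  rw [← ENNReal.toReal_lt_toReal (by finiteness) (by finiteness), ENNReal.toReal_mul,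
    ENNReal.toReal_one_sub hsk, ENNReal.toReal_one_sub hs.le, ENNReal.toReal_pow,
    ENNReal.toReal_natCast]
  exact Real.one_sub_pow_lt_mul_one_sub ENNReal.toReal_nonneg
    (ENNReal.toReal_lt_of_lt_ofReal (b := 1) (by simpa using hs)) hk

def genFun (p : ℕ → ℝ≥0∞) (s : ℝ≥0∞) : ℝ≥0∞ := ∑' k, p k * s ^ k

section GeneratingFunction

variable {p : ℕ → ℝ≥0∞}

theorem genFun_monotone (p : ℕ → ℝ≥0∞) : Monotone (genFun p) := fun _ _ hst =>
  ENNReal.tsum_le_tsum fun k => mul_le_mul_right (pow_le_pow_left' hst k) _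

theorem genFun_one (hp : ∑' k, p k = 1) : genFun p 1 = 1 := by
  simp [genFun, hp]

theorem genFun_iSup {u : ℕ → ℝ≥0∞} (hu : Monotone u) :
    genFun p (⨆ n, u n) = ⨆ n, genFun p (u n) := by
  simp_rw [genFun, ENNReal.iSup_pow, ENNReal.mul_iSup]
  rw [← lintegral_count, lintegral_iSup (fun _ => measurable_from_top)]
  · simp_rw [lintegral_count]
  · exact fun m n hmn k => mul_le_mul_right (pow_le_pow_left' (hu hmn) k) _

def genFunHom (p : ℕ → ℝ≥0∞) : ℝ≥0∞ →o ℝ≥0∞ := ⟨genFun p, genFun_monotone p⟩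

theorem lfp_genFunHom_eq_iSup_iterate (p : ℕ → ℝ≥0∞) :
    (genFunHom p).lfp = ⨆ n, (genFun p)^[n] 0 :=
  fixedPoints.lfp_eq_sSup_iterate _ <|
    OmegaCompletePartialOrder.ωScottContinuous_iff_map_ωSup_of_orderHom.mpr fun c =>
      genFun_iSup c.monotone

theorem exists_two_le_ne_zero (hp : ∑' k, p k = 1) (hp01 : p 0 + p 1 < 1) :
    ∃ k, 2 ≤ k ∧ p k ≠ 0 := by
  by_contra! h
  have : ∑' k, p k = p 0 + p 1 := by
    rw [tsum_eq_sum (s := Finset.range 2) fun k hk => h k (by simp at hk; omega)]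
    simp [Finset.sum_range_succ]
  exact hp01.ne (this ▸ hp)

theorem genFun_add_tsum_mul_one_sub_pow (hp : ∑' k, p k = 1) {s : ℝ≥0∞} (hs : s ≤ 1) :
    genFun p s + ∑' k, p k * (1 - s ^ k) = 1 := by
  rw [genFun, ← ENNReal.tsum_add]
  refine (tsum_congr fun k => ?_).trans hp
  rw [← mul_add, add_tsub_cancel_of_le (pow_le_one₀ zero_le hs), mul_one]

theorem lt_genFun (hp : ∑' k, p k = 1) (hp01 : p 0 + p 1 < 1)
    (hmean : ∑' k : ℕ, (k : ℝ≥0∞) * p k ≤ 1) {s : ℝ≥0∞} (hs : s < 1) : s < genFun p s := by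
  obtain ⟨k₀, hk₀, hpk₀⟩ := exists_two_le_ne_zero hp hp01
  have hdefect : ∑' k, p k * (1 - s ^ k) < 1 - s := calc
    ∑' k, p k * (1 - s ^ k) < ∑' k, p k * (k * (1 - s)) := by
      refine ENNReal.tsum_lt_tsum (i := k₀) ?_ (fun k => ?_) ?_
      · refine ne_top_of_le_ne_top ENNReal.one_ne_top (le_of_le_of_eq ?_ hp)
        exact ENNReal.tsum_le_tsum fun k => mul_le_of_le_one_right' tsub_le_self
      · exact mul_le_mul_right (ENNReal.one_sub_pow_le_mul_one_sub hs.le k) _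
      · exact ENNReal.mul_lt_mul_right hpk₀
          (ne_top_of_le_ne_top ENNReal.one_ne_top (hp ▸ ENNReal.le_tsum k₀))
          (ENNReal.one_sub_pow_lt_mul_one_sub hs hk₀)
    _ = (∑' k : ℕ, (k : ℝ≥0∞) * p k) * (1 - s) := by
      rw [← ENNReal.tsum_mul_right]
      exact tsum_congr fun k => by ring
    _ ≤ 1 - s := by simpa using mul_le_mul_left hmean (1 - s)
  by_contra! hle
  refine lt_irrefl (1 : ℝ≥0∞) ?_
  calc (1 : ℝ≥0∞) = genFun p s + ∑' k, p k * (1 - s ^ k) :=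
        (genFun_add_tsum_mul_one_sub_pow hp hs.le).symm
    _ < s + (1 - s) := ENNReal.add_lt_add_of_le_of_lt (hle.trans_lt hs).ne_top hle hdefect
    _ = 1 := add_tsub_cancel_of_le hs.le

theorem lfp_genFunHom_eq_one (hp : ∑' k, p k = 1) (hp01 : p 0 + p 1 < 1)
    (hmean : ∑' k : ℕ, (k : ℝ≥0∞) * p k ≤ 1) : (genFunHom p).lfp = 1 := by
  refine le_antisymm ((genFunHom p).lfp_le_fixed (genFun_one hp)) (not_lt.mp fun hlt => ?_)
  exact (lt_genFun hp hp01 hmean hlt).ne' (genFunHom p).map_lfp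

end GeneratingFunction

section SigmaAlgebra

variable {Ω ι β : Type*} [MeasurableSpace β] {X : ι → Ω → β} {S T : Set ι}

abbrev sigmaOf (X : ι → Ω → β) (S : Set ι) : MeasurableSpace Ω :=
  ⨆ i ∈ S, MeasurableSpace.comap (X i) inferInstance

theorem sigmaOf_mono (h : S ⊆ T) : sigmaOf X S ≤ sigmaOf X T := biSup_mono h

theorem sigmaOf_le {mΩ : MeasurableSpace Ω} (hX : ∀ i, Measurable (X i)) (S : Set ι) :
    sigmaOf X S ≤ mΩ :=
  iSup₂_le fun i _ => (hX i).comap_le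

theorem measurable_sigmaOf {i : ι} (hi : i ∈ S) : Measurable[sigmaOf X S] (X i) :=
  (comap_measurable (X i)).mono (le_biSup (fun i => MeasurableSpace.comap (X i) _) hi) le_rfl

theorem indep_sigmaOf_of_notMem [MeasurableSpace Ω] (hX : ∀ i, Measurable (X i)) {P : Measure Ω}
    (hindep : iIndepFun X P) {i : ι} (hi : i ∉ S) :
    Indep (sigmaOf X S) (MeasurableSpace.comap (X i) inferInstance) P := by
  have := indep_iSup_of_disjoint (fun j => (hX j).comap_le) hindep
    (Set.disjoint_singleton_right.mpr hi)
  rwa [iSup_singleton] at this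

end SigmaAlgebra

section Integrals

variable {Ω : Type*} [MeasurableSpace Ω] {P : Measure Ω}

theorem lintegral_comp_eq_tsum {X : Ω → ℕ} (hX : Measurable X) (φ : ℕ → ℝ≥0∞) :
    ∫⁻ ω, φ (X ω) ∂P = ∑' k, φ k * P (X ⁻¹' {k}) := by
  rw [← lintegral_map measurable_from_top hX, lintegral_countable' φ]
  simp_rw [Measure.map_apply hX (measurableSet_singleton _)]

theorem lintegral_pow_eq_genFun {X : Ω → ℕ} (hX : Measurable X) {p : ℕ → ℝ≥0∞}
    (hlaw : ∀ k, P {ω | X ω = k} = p k) (s : ℝ≥0∞) : ∫⁻ ω, s ^ X ω ∂P = genFun p s := by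
  rw [lintegral_comp_eq_tsum hX]
  exact tsum_congr fun k => by rw [mul_comm, ← hlaw k]; rfl

variable {ι : Type*} {ζ : ι → Ω → ℕ} {p : ℕ → ℝ≥0∞}

theorem lintegral_indicator_prod_pow (hmeas : ∀ i, Measurable (ζ i)) (hindep : iIndepFun ζ P)
    (hlaw : ∀ i k, P {ω | ζ i ω = k} = p k) {S : Set ι} {A : Set Ω}
    (hA : MeasurableSet[sigmaOf ζ S] A) (s : ℝ≥0∞) (J : Finset ι) (hJ : Disjoint S J) :
    ∫⁻ ω, A.indicator (fun ω => ∏ j ∈ J, s ^ ζ j ω) ω ∂P = P A * genFun p s ^ J.card := by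
  classical
  induction J using Finset.induction_on with
  | empty =>
    simp only [Finset.prod_empty, Finset.card_empty, pow_zero, mul_one]
    exact lintegral_indicator_one (sigmaOf_le hmeas S A hA)
  | insert j J hj ih =>
    rw [Finset.coe_insert, Set.disjoint_insert_right] at hJ
    have hsplit : ∀ ω, A.indicator (fun ω => ∏ i ∈ insert j J, s ^ ζ i ω) ω
        = A.indicator (fun ω => ∏ i ∈ J, s ^ ζ i ω) ω * s ^ ζ j ω := fun ω => by
      by_cases hω : ω ∈ A <;> simp [hω, Finset.prod_insert hj, mul_comm]
    have hfirst : Measurable[sigmaOf ζ (S ∪ J)] (A.indicator fun ω => ∏ i ∈ J, s ^ ζ i ω) :=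
      (Finset.measurable_prod (f := fun i ω => s ^ ζ i ω) J fun i hi =>
        measurable_from_top.comp (measurable_sigmaOf (Or.inr hi))).indicator
        (sigmaOf_mono subset_union_left _ hA)
    have hsecond : Measurable[MeasurableSpace.comap (ζ j) inferInstance] fun ω => s ^ ζ j ω :=
      measurable_from_top.comp (comap_measurable (ζ j))
    rw [lintegral_congr hsplit,
      lintegral_mul_eq_lintegral_mul_lintegral_of_independent_measurableSpace
        (sigmaOf_le hmeas _) (hmeas j).comap_le
        (indep_sigmaOf_of_notMem hmeas hindep (by simp [hJ.1, hj])) hfirst hsecond,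
      ih hJ.2, lintegral_pow_eq_genFun (hmeas j) (hlaw j), Finset.card_insert_of_notMem hj,
      pow_succ, mul_assoc]

end Integrals

theorem measurable_apply_of_measurable_index {Ω γ : Type*} {mΩ : MeasurableSpace Ω}
    [MeasurableSpace γ] {F : ℕ → Ω → γ} {N : Ω → ℕ} (hF : ∀ k, Measurable (F k))
    (hN : Measurable N) : Measurable fun ω => F (N ω) ω :=
  (measurable_from_prod_countable_left (f := fun q : Ω × ℕ => F q.2 q.1) hF).comp
    (measurable_id.prodMk hN)

section GaltonWatson

variable {Ω : Type*} {ζ : ℕ × ℕ → Ω → ℕ}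

theorem gwZ_succ (ζ : ℕ × ℕ → Ω → ℕ) (n : ℕ) (ω : Ω) :
    gwZ ζ (n + 1) ω = ∑ i ∈ Finset.range (gwZ ζ n ω), ζ (i, n + 1) ω := rfl

theorem measurable_gwZ_sigmaOf (ζ : ℕ × ℕ → Ω → ℕ) (n : ℕ) :
    Measurable[sigmaOf ζ {x | x.2 ≤ n}] (gwZ ζ n) := by
  induction n with
  | zero => exact measurable_const
  | succ n ih =>
    exact measurable_apply_of_measurable_index
      (F := fun k ω => ∑ i ∈ Finset.range k, ζ (i, n + 1) ω)
      (fun k => Finset.measurable_sum _ fun i _ => measurable_sigmaOf (by simp))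
      (ih.mono (sigmaOf_mono fun x (hx : x.2 ≤ n) => hx.trans n.le_succ) le_rfl)

theorem measurable_gwZ [MeasurableSpace Ω] (hmeas : ∀ i, Measurable (ζ i)) (n : ℕ) :
    Measurable (gwZ ζ n) :=
  (measurable_gwZ_sigmaOf ζ n).mono (sigmaOf_le hmeas _) le_rfl

theorem gwZ_succ_eq_zero {n : ℕ} {ω : Ω} (h : gwZ ζ n ω = 0) : gwZ ζ (n + 1) ω = 0 := by
  simp [gwZ_succ, h]

variable [MeasurableSpace Ω] {P : Measure Ω} {p : ℕ → ℝ≥0∞}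

theorem lintegral_pow_gwZ_succ (hmeas : ∀ i, Measurable (ζ i)) (hindep : iIndepFun ζ P)
    (hlaw : ∀ i k, P {ω | ζ i ω = k} = p k) (n : ℕ) (s : ℝ≥0∞) :
    ∫⁻ ω, s ^ gwZ ζ (n + 1) ω ∂P = ∫⁻ ω, genFun p s ^ gwZ ζ n ω ∂P := by
  set J : ℕ → Finset (ℕ × ℕ) := fun k => (Finset.range k).map (.sectL ℕ (n + 1))
  have hsplit : ∀ ω, s ^ gwZ ζ (n + 1) ω
      = ∑' k, (gwZ ζ n ⁻¹' {k}).indicator (fun ω => ∏ j ∈ J k, s ^ ζ j ω) ω := fun ω => by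
    rw [tsum_eq_single (gwZ ζ n ω) fun k hk => ?_,
      indicator_of_mem (show ω ∈ gwZ ζ n ⁻¹' {gwZ ζ n ω} from rfl), gwZ_succ,
      Finset.prod_map, Finset.prod_pow_eq_pow_sum]
    · rfl
    · exact indicator_of_notMem (show ω ∉ gwZ ζ n ⁻¹' {k} from Ne.symm hk) _
  have hdisj : ∀ k, Disjoint {x : ℕ × ℕ | x.2 ≤ n} (J k) := fun k =>
    Set.disjoint_left.mpr fun x (hx : x.2 ≤ n) hxJ => by
      obtain ⟨i, -, rfl⟩ := Finset.mem_map.mp hxJ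
      simp at hx
  calc ∫⁻ ω, s ^ gwZ ζ (n + 1) ω ∂P
      = ∑' k, ∫⁻ ω, (gwZ ζ n ⁻¹' {k}).indicator (fun ω => ∏ j ∈ J k, s ^ ζ j ω) ω ∂P := by
        simp_rw [hsplit]
        refine lintegral_tsum fun k => ((Finset.measurable_prod _ fun j _ =>
          measurable_from_top.comp (hmeas j)).indicator
          (measurable_gwZ hmeas n (measurableSet_singleton k))).aemeasurable
    _ = ∑' k, genFun p s ^ k * P (gwZ ζ n ⁻¹' {k}) := tsum_congr fun k => by
        rw [lintegral_indicator_prod_pow hmeas hindep hlaw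
          (measurable_gwZ_sigmaOf ζ n (measurableSet_singleton k)) s _ (hdisj k), mul_comm]
        simp [J]
    _ = ∫⁻ ω, genFun p s ^ gwZ ζ n ω ∂P :=
        (lintegral_comp_eq_tsum (measurable_gwZ hmeas n) _).symm

theorem lintegral_pow_gwZ [IsProbabilityMeasure P] (hmeas : ∀ i, Measurable (ζ i))
    (hindep : iIndepFun ζ P) (hlaw : ∀ i k, P {ω | ζ i ω = k} = p k) (n : ℕ) (s : ℝ≥0∞) :
    ∫⁻ ω, s ^ gwZ ζ n ω ∂P = (genFun p)^[n] s := by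
  induction n generalizing s with
  | zero => simp [gwZ]
  | succ n ih =>
    rw [lintegral_pow_gwZ_succ hmeas hindep hlaw, ih, Function.iterate_succ_apply]

theorem measure_gwZ_eq_zero [IsProbabilityMeasure P] (hmeas : ∀ i, Measurable (ζ i))
    (hindep : iIndepFun ζ P) (hlaw : ∀ i k, P {ω | ζ i ω = k} = p k) (n : ℕ) :
    P {ω | gwZ ζ n ω = 0} = (genFun p)^[n] 0 := by
  rw [← lintegral_pow_gwZ hmeas hindep hlaw, lintegral_comp_eq_tsum (measurable_gwZ hmeas n),
    tsum_eq_single 0 fun k hk => by simp [hk]]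
  simp [Set.preimage, Set.mem_singleton_iff]

end GaltonWatson

theorem gw_extinction_critical_subcritical_general
    {Ω : Type*} [MeasurableSpace Ω] (P : Measure Ω) [IsProbabilityMeasure P]
    (p : ℕ → ℝ≥0∞) (hp : ∑' n, p n = 1)
    (hp01 : p 0 + p 1 < 1)
    (hmean : ∑' n : ℕ, (n : ℝ≥0∞) * p n ≤ 1)
    (ζ : ℕ × ℕ → Ω → ℕ)
    (hmeas : ∀ i, Measurable (ζ i))
    (hindep : iIndepFun ζ P)
    (hlaw : ∀ (i : ℕ × ℕ) (k : ℕ), P {ω | ζ i ω = k} = p k) :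
    P {ω | ∃ n : ℕ, gwZ ζ n ω = 0} = 1 := by
  have hmono : Monotone fun n => {ω | gwZ ζ n ω = 0} :=
    monotone_nat_of_le_succ fun n _ => gwZ_succ_eq_zero
  rw [ofPred_exists, hmono.measure_iUnion]
  simp_rw [measure_gwZ_eq_zero hmeas hindep hlaw, ← lfp_genFunHom_eq_iSup_iterate]
  exact lfp_genFunHom_eq_one hp hp01 hmean

/-- for a critical or sub-critical Galton-Watson process (mean `m ≤ 1`) whose
offspring distribution `p` satisfies `0 < p 0 < 1` and `p 0 + p 1 < 1`, extinction occurs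
almost surely: `P(∃ n, Z_n = 0) = 1`. -/
theorem gw_extinction_critical_subcritical
    {Ω : Type*} [MeasurableSpace Ω] (P : Measure Ω) [IsProbabilityMeasure P]
    (p : ℕ → ℝ≥0∞) (hp : ∑' n, p n = 1)
    (hp0 : 0 < p 0) (hp0' : p 0 < 1) (hp01 : p 0 + p 1 < 1)
    (hmean : ∑' n : ℕ, (n : ℝ≥0∞) * p n ≤ 1)
    (ζ : ℕ × ℕ → Ω → ℕ)
    (hmeas : ∀ i, Measurable (ζ i))
    (hindep : iIndepFun ζ P)
    (hlaw : ∀ (i : ℕ × ℕ) (k : ℕ), P {ω | ζ i ω = k} = p k) :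
    P {ω | ∃ n : ℕ, gwZ ζ n ω = 0} = 1 :=
  gw_extinction_critical_subcritical_general P p hp hp01 hmean ζ hmeas hindep hlaw

end GWPaper
end
end

section
/- (Dwass formula) Let τ be a GW tree with critical or sub-critical offspring distribution p, and let (ζ_k, k∈ℕ*) be i.i.d. random variables with law p, S_n = Σ_{k=1}^n ζ_k. Then for every n ≥ 1: P(|τ| = n) = (1/n) P(S_n = n-1). -/
open MeasureTheory ProbabilityTheory Filter Set
open scoped ENNReal Classical

noncomputable section

namespace GWPaper

/-- Neveu formalism: a rooted planar tree is a prefix-closed set of finite sequences of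
positive integers (coded as lists of naturals, label `0` being forbidden), containing the
root `[]`, and such that the children of a vertex `u` are `u ++ [1], …, u ++ [k_u]`. -/
def IsTree (t : Set (List ℕ)) : Prop :=
  ([] ∈ t) ∧
  (∀ ⦃u v : List ℕ⦄, u ∈ t → v <+: u → v ∈ t) ∧
  (∀ u : List ℕ, u ++ [0] ∉ t) ∧
  (∀ (u : List ℕ) (i : ℕ), 1 ≤ i → u ++ [i + 1] ∈ t → u ++ [i] ∈ t)

/-- A tree is locally finite when every vertex has finitely many children. -/
def LocFinite (t : Set (List ℕ)) : Prop :=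
  ∀ u : List ℕ, {i : ℕ | u ++ [i] ∈ t}.Finite

/-- `𝕋`: the set of locally finite trees. -/
def TT : Set (Set (List ℕ)) := {t | IsTree t ∧ LocFinite t}

/-- `𝕋₀`: the set of finite trees. -/
def TT0 : Set (Set (List ℕ)) := {t | IsTree t ∧ t.Finite}

/-- `k_u(t)`: the number of children of `u` in `t`. -/
def kdeg (t : Set (List ℕ)) (u : List ℕ) : ℕ := {i : ℕ | u ++ [i] ∈ t}.ncard

/-- `r_h(t)`: the restriction of `t` to the vertices of height at most `h`. -/
def restrict (h : ℕ) (t : Set (List ℕ)) : Set (List ℕ) := {u ∈ t | u.length ≤ h}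

/-- `t ∈ 𝕋^{(h)}`: the tree `t` has height at most `h`. -/
def heightLe (h : ℕ) (t : Set (List ℕ)) : Prop := ∀ u ∈ t, u.length ≤ h

/-- `H(t)`: the height of `t`, an extended natural number. -/
def heightE (t : Set (List ℕ)) : ℕ∞ := ⨆ u ∈ t, (u.length : ℕ∞)

/-- `x` is a leaf of `t`. -/
def IsLeaf (t : Set (List ℕ)) (x : List ℕ) : Prop := x ∈ t ∧ ∀ i : ℕ, x ++ [i] ∉ t

/-- `t ⊛_x t'`: the tree obtained by grafting `t'` on the leaf `x` of `t`. -/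
def graft (t : Set (List ℕ)) (x : List ℕ) (t' : Set (List ℕ)) : Set (List ℕ) :=
  t ∪ {w | ∃ u ∈ t', w = x ++ u}

/-- `𝕋(t,x)`: all trees obtained by grafting some tree of `𝕋` on the leaf `x` of `t`. -/
def graftSet (t : Set (List ℕ)) (x : List ℕ) : Set (Set (List ℕ)) :=
  {s | ∃ t' ∈ TT, s = graft t x t'}

/-- `z_n(t)`: the number of vertices of `t` at height `n`. -/
def zgen (n : ℕ) (t : Set (List ℕ)) : ℕ := {u ∈ t | u.length = n}.ncard

/-- `𝕋₁`: trees of `𝕋` having exactly one infinite spine. -/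
def TT1 : Set (Set (List ℕ)) :=
  {t | t ∈ TT ∧ ∃! v : ℕ → ℕ, ∀ n : ℕ, (List.range n).map v ∈ t}

/-- The Galton-Watson weight `∏_{u ∈ t, |u| < h} p(k_u(t))` of a tree cut at height `h`. -/
def gwWeight (p : ℕ → ℝ≥0∞) (h : ℕ) (t : Set (List ℕ)) : ℝ≥0∞ :=
  ∏ᶠ u ∈ {u ∈ t | u.length < h}, p (kdeg t u)

/-- The Galton-Watson weight `∏_{u ∈ t} p(k_u(t))` of a finite tree. -/
def gwWeight0 (p : ℕ → ℝ≥0∞) (t : Set (List ℕ)) : ℝ≥0∞ :=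
  ∏ᶠ u ∈ t, p (kdeg t u)

/-- `τ` is a Galton-Watson tree with offspring distribution `p` under `P`:
it takes values in `𝕋` and `P(r_h(τ) = t) = ∏_{u ∈ t, |u| < h} p(k_u(t))`
for every `h ≥ 1` and every (finite) tree `t` of height at most `h`. -/
def IsGW {Ω : Type*} [MeasurableSpace Ω] (P : Measure Ω) (p : ℕ → ℝ≥0∞)
    (τ : Ω → Set (List ℕ)) : Prop :=
  (∀ ω, τ ω ∈ TT) ∧
  ∀ h : ℕ, 1 ≤ h → ∀ t ∈ TT0, heightLe h t →
    P {ω | restrict h (τ ω) = t} = gwWeight p h t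

/-- `(τs, sp)` is a Kesten tree associated to `p` (with mean `m`) under `P`:
`τs` is the tree, `sp n` is the (unique) special vertex at generation `n`; the special
vertices form an infinite spine and the finite-dimensional distributions are
`P(r_h(τs) = t, sp h = v) = m^{-h} ∏_{u ∈ t, |u| < h} p(k_u(t))`. -/
def IsKesten {Ω : Type*} [MeasurableSpace Ω] (P : Measure Ω) (p : ℕ → ℝ≥0∞) (m : ℝ≥0∞)
    (τs : Ω → Set (List ℕ)) (sp : Ω → ℕ → List ℕ) : Prop :=
  (∀ ω, τs ω ∈ TT) ∧
  (∀ ω, sp ω 0 = []) ∧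
  (∀ ω n, sp ω n ∈ τs ω ∧ (sp ω n).length = n ∧ sp ω n <+: sp ω (n + 1)) ∧
  ∀ (h : ℕ) (t : Set (List ℕ)), t ∈ TT0 → heightLe h t → ∀ v ∈ t, v.length = h →
    P {ω | restrict h (τs ω) = t ∧ sp ω h = v} = m⁻¹ ^ h * gwWeight p h t

/-!
The Łukasiewicz code of a finite tree lists the offspring numbers of its vertices in
depth-first order. It is a bijection from trees with `n` vertices onto the words `x₁ ⋯ xₙ`
whose walk `∑_{i ≤ j} (xᵢ - 1)` stays nonnegative for `j < n` and equals `-1` at `j = n`, and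
it carries the GW weight of a tree to `∏ p(xᵢ) = P(ζ₁ = x₁, …, ζₙ = xₙ)`. By the cycle lemma,
each word with `x₁ + ⋯ + xₙ = n - 1` has exactly one cyclic rotation that is such a code (the
one starting right after the first minimum of its walk), and rotations preserve `∏ p(xᵢ)`.
Hence `P(Sₙ = n - 1) = n P(|τ| = n)`. As `τ` is only described through the laws of its
restrictions `r_h(τ)`, the event `{|τ| = n}` is decomposed according to `r_n(τ)`; additivity
comes from the fact that the weights of all trees of height at most `n` add up to one.
-/

/-- `IsLukasiewicz k l`: the walk `k + ∑_{i < j} (l_i - 1)` is positive for `j < |l|` and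
vanishes at `j = |l|`, i.e. `l` is the Łukasiewicz code of a forest of `k` trees. -/
def IsLukasiewicz (k : ℕ) (l : List ℕ) : Prop :=
  l.sum + k = l.length ∧ ∀ j < l.length, j < (l.take j).sum + k

theorem isLukasiewicz_zero_iff {l : List ℕ} : IsLukasiewicz 0 l ↔ l = [] := by
  refine ⟨fun ⟨_, h⟩ => ?_, fun h => ⟨by simp [h], by simp [h]⟩⟩
  cases l with
  | nil => rfl
  | cons x l => simpa using h 0

theorem isLukasiewicz_nil_iff {k : ℕ} : IsLukasiewicz k [] ↔ k = 0 := by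
  simp [IsLukasiewicz]

theorem isLukasiewicz_cons_iff {k x : ℕ} {l : List ℕ} :
    IsLukasiewicz (k + 1) (x :: l) ↔ IsLukasiewicz (k + x) l := by
  simp only [IsLukasiewicz, List.sum_cons, List.length_cons, Nat.forall_lt_succ_left,
    List.take_succ_cons, List.take_zero, List.sum_nil]
  constructor
  · rintro ⟨h, -, hj⟩
    exact ⟨by omega, fun j hj' => by have := hj j hj'; omega⟩
  · rintro ⟨h, hj⟩
    exact ⟨by omega, by omega, fun j hj' => by have := hj j hj'; omega⟩

theorem IsLukasiewicz.append {a b : ℕ} {u v : List ℕ} (hu : IsLukasiewicz a u)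
    (hv : IsLukasiewicz b v) : IsLukasiewicz (a + b) (u ++ v) := by
  obtain ⟨hu, hu'⟩ := hu
  obtain ⟨hv, hv'⟩ := hv
  refine ⟨by simp; omega, fun j hj => ?_⟩
  rw [List.take_append, List.sum_append]
  rcases lt_or_ge j u.length with h | h
  · have := hu' j h
    omega
  · have := hv' (j - u.length) (by simp at hj; omega)
    rw [List.take_of_length_le h]
    omega

theorem existsUnique_first_min {β : Type*} [LinearOrder β] (f : ℕ → β) {n : ℕ} (hn : 0 < n) :
    ∃! r, r < n ∧ (∀ j < n, f r ≤ f j) ∧ ∀ i < r, f r < f i := by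
  have hmin : ∃ r, r < n ∧ ∀ j < n, f r ≤ f j := by
    obtain ⟨r, hr, hmin⟩ := (Finset.range n).exists_min_image f ⟨0, Finset.mem_range.2 hn⟩
    exact ⟨r, Finset.mem_range.1 hr, fun j hj => hmin j (Finset.mem_range.2 hj)⟩
  refine ⟨Nat.find hmin, ⟨(Nat.find_spec hmin).1, (Nat.find_spec hmin).2, fun i hi => ?_⟩, ?_⟩
  · have := Nat.find_min hmin hi
    simp only [not_and, not_forall, not_le] at this
    obtain ⟨j, hj, hji⟩ := this (hi.trans (Nat.find_spec hmin).1)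
    exact ((Nat.find_spec hmin).2 j hj).trans_lt hji
  · rintro r ⟨hr, hrmin, hrfirst⟩
    rcases lt_trichotomy r (Nat.find hmin) with h | h | h
    · exact absurd ⟨hr, hrmin⟩ (Nat.find_min hmin h)
    · exact h
    · exact absurd ((Nat.find_spec hmin).2 r hr) (not_le.2 (hrfirst _ h))

def lukaWalk (l : List ℕ) (j : ℕ) : ℤ := ((l.take j).sum : ℤ) - j

theorem isLukasiewicz_one_iff {l : List ℕ} :
    IsLukasiewicz 1 l ↔ lukaWalk l l.length = -1 ∧ ∀ j < l.length, 0 ≤ lukaWalk l j := by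
  simp only [IsLukasiewicz, lukaWalk, List.take_length]
  constructor <;> rintro ⟨h1, h2⟩ <;> exact ⟨by omega, fun j hj => by have := h2 j hj; omega⟩

theorem lukaWalk_rotate_of_le {l : List ℕ} {r q : ℕ} (hq : r + q ≤ l.length) :
    lukaWalk (l.rotate r) q = lukaWalk l (r + q) - lukaWalk l r := by
  rw [List.rotate_eq_drop_append_take (by omega), lukaWalk, lukaWalk, lukaWalk,
    List.take_append_of_le_length (by simp; omega), List.take_add, List.sum_append]
  push_cast
  ring

theorem lukaWalk_rotate_of_ge {l : List ℕ} {r q : ℕ} (hr : r ≤ l.length)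
    (hq : l.length ≤ r + q) (hq' : q ≤ l.length) :
    lukaWalk (l.rotate r) q =
      lukaWalk l l.length + lukaWalk l (r + q - l.length) - lukaWalk l r := by
  rw [List.rotate_eq_drop_append_take hr, lukaWalk, lukaWalk, lukaWalk, lukaWalk,
    List.take_append, List.take_of_length_le (by simp; omega), List.take_take, List.length_drop,
    min_eq_left (by omega : q - (l.length - r) ≤ r), List.sum_append, List.take_length,
    show q - (l.length - r) = r + q - l.length by omega]
  have := List.sum_take_add_sum_drop l r
  omega

theorem isLukasiewicz_rotate_iff {l : List ℕ} (hs : l.sum + 1 = l.length) {r : ℕ}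
    (hr : r < l.length) :
    IsLukasiewicz 1 (l.rotate r) ↔
      (∀ j < l.length, lukaWalk l r ≤ lukaWalk l j) ∧ ∀ i < r, lukaWalk l r < lukaWalk l i := by
  have hend : lukaWalk l l.length = -1 := by
    simp only [lukaWalk, List.take_length]
    omega
  have hend_rotate : lukaWalk (l.rotate r) l.length = -1 := by
    rw [lukaWalk, ← List.length_rotate l r, List.take_length, (List.rotate_perm l r).sum_eq,
      List.length_rotate]
    omega
  rw [isLukasiewicz_one_iff, List.length_rotate, and_iff_right hend_rotate]
  constructor
  · intro h
    have hfirst : ∀ i < r, lukaWalk l r < lukaWalk l i := fun i hi => by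
      have := h (i + (l.length - r)) (by omega)
      rw [lukaWalk_rotate_of_ge hr.le (by omega) (by omega), hend,
        show r + (i + (l.length - r)) - l.length = i by omega] at this
      linarith
    refine ⟨fun j hj => ?_, hfirst⟩
    rcases le_or_gt r j with hrj | hjr
    · have := h (j - r) (by omega)
      rwa [lukaWalk_rotate_of_le (by omega), Nat.add_sub_cancel' hrj, sub_nonneg] at this
    · exact (hfirst j hjr).le
  · rintro ⟨hmin, hfirst⟩ q hq
    rcases lt_or_ge (r + q) l.length with hrq | hrq
    · rw [lukaWalk_rotate_of_le hrq.le, sub_nonneg]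
      exact hmin _ hrq
    · rw [lukaWalk_rotate_of_ge hr.le hrq hq.le, hend]
      linarith [hfirst (r + q - l.length) (by omega)]

theorem existsUnique_isLukasiewicz_rotate {l : List ℕ} (hs : l.sum + 1 = l.length) :
    ∃! r, r < l.length ∧ IsLukasiewicz 1 (l.rotate r) := by
  obtain ⟨r, ⟨hr, hmin⟩, huniq⟩ := existsUnique_first_min (lukaWalk l) (by omega : 0 < l.length)
  exact ⟨r, ⟨hr, (isLukasiewicz_rotate_iff hs hr).2 hmin⟩,
    fun r' ⟨hr', h'⟩ => huniq r' ⟨hr', (isLukasiewicz_rotate_iff hs hr').1 h'⟩⟩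

theorem tsum_cycle_lemma (w : List ℕ → ℝ≥0∞) (hw : ∀ l r, w (l.rotate r) = w l) (n : ℕ) :
    ∑' l : {l : List ℕ | l.length = n ∧ l.sum + 1 = n}, w l =
      n * ∑' l : {l : List ℕ | IsLukasiewicz 1 l ∧ l.length = n}, w l := by
  set R : ℕ → Set (List ℕ) := fun r => {l | IsLukasiewicz 1 (l.rotate r) ∧ l.length = n}
  have hrotate (r : ℕ) :
      ∑' l, (R r).indicator w l = ∑' l : {l : List ℕ | IsLukasiewicz 1 l ∧ l.length = n}, w l := by
    let e : List ℕ ≃ List ℕ := Equiv.ofBijective (·.rotate r)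
      ⟨List.rotate_injective r, fun m => ⟨_, List.rotate_eq_iff.2 rfl⟩⟩
    rw [tsum_subtype, ← e.tsum_eq ({l : List ℕ | IsLukasiewicz 1 l ∧ l.length = n}.indicator w)]
    refine tsum_congr fun l => ?_
    change _ = Set.indicator _ w (l.rotate r)
    simp [R, Set.indicator_apply, hw]
  have hcount (l : List ℕ) : {l : List ℕ | l.length = n ∧ l.sum + 1 = n}.indicator w l =
      ∑ r ∈ Finset.range n, (R r).indicator w l := by
    by_cases hl : l.length = n ∧ l.sum + 1 = n
    · obtain ⟨rfl, hs⟩ := hl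
      obtain ⟨r, ⟨hr, hluk⟩, huniq⟩ := existsUnique_isLukasiewicz_rotate hs
      rw [Finset.sum_eq_single_of_mem r (Finset.mem_range.2 hr) fun r' hr' hne =>
          Set.indicator_of_notMem (fun h => hne (huniq r' ⟨Finset.mem_range.1 hr', h.1⟩)) _,
        Set.indicator_of_mem (show l ∈ R r from ⟨hluk, rfl⟩), Set.indicator_of_mem
          (show l ∈ {l' : List ℕ | l'.length = l.length ∧ l'.sum + 1 = l.length} from ⟨rfl, hs⟩)]
    · rw [Set.indicator_of_notMem
        (show l ∉ {l' : List ℕ | l'.length = n ∧ l'.sum + 1 = n} from hl), eq_comm]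
      refine Finset.sum_eq_zero fun r _ => Set.indicator_of_notMem (s := R r) ?_ _
      rintro ⟨hluk, hlen⟩
      have := hluk.1
      rw [(List.rotate_perm l r).sum_eq, List.length_rotate] at this
      exact hl ⟨hlen, by omega⟩
  rw [tsum_subtype, tsum_congr hcount, Summable.tsum_finsetSum fun _ _ => ENNReal.summable]
  simp_rw [hrotate]
  simp

theorem tsum_prod_map_of_length {α : Type*} (g : α → ℝ≥0∞) (n : ℕ) :
    ∑' l : {l : List α // l.length = n}, (l.1.map g).prod = (∑' a, g a) ^ n := by
  induction n with
  | zero =>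
    rw [tsum_eq_single (⟨[], rfl⟩ : {l : List α // l.length = 0}) fun l hl =>
      absurd (Subtype.ext (List.eq_nil_of_length_eq_zero l.2)) hl]
    simp
  | succ n ih =>
    let e : α × {l : List α // l.length = n} ≃ {l : List α // l.length = n + 1} :=
      { toFun x := ⟨x.1 :: x.2.1, by simp [x.2.2]⟩
        invFun l := ⟨l.1.head (List.ne_nil_of_length_eq_add_one l.2), ⟨l.1.tail, by simp [l.2]⟩⟩
        left_inv _ := rfl
        right_inv := fun ⟨a :: l, _⟩ => rfl }
    rw [← e.tsum_eq]
    change ∑' x : α × {l : List α // l.length = n}, ((x.1 :: x.2.1).map g).prod = _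
    simp only [ENNReal.tsum_prod', List.map_cons, List.prod_cons, ENNReal.tsum_mul_left, ih,
      ENNReal.tsum_mul_right, pow_succ']

theorem tsum_mul_prod_map {α : Type*} (q : ℕ → ℝ≥0∞) (g : α → ℝ≥0∞) :
    ∑' l : List α, q l.length * (l.map g).prod = ∑' k, q k * (∑' a, g a) ^ k := by
  rw [← (Equiv.sigmaFiberEquiv List.length).tsum_eq, ENNReal.tsum_sigma']
  refine tsum_congr fun k => ?_
  simp only [Equiv.sigmaFiberEquiv_apply]
  rw [← tsum_prod_map_of_length, ← ENNReal.tsum_mul_left]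
  exact tsum_congr fun l => by rw [l.2]

def subtree (t : Set (List ℕ)) (j : ℕ) : Set (List ℕ) := {u | j :: u ∈ t}

theorem kdeg_cons (t : Set (List ℕ)) (j : ℕ) (u : List ℕ) :
    kdeg t (j :: u) = kdeg (subtree t j) u := rfl

theorem mem_children_iff {t : Set (List ℕ)} (ht : IsTree t) {u : List ℕ}
    (hfin : {i | u ++ [i] ∈ t}.Finite) {j : ℕ} : u ++ [j] ∈ t ↔ 1 ≤ j ∧ j ≤ kdeg t u := by
  obtain ⟨-, -, hzero, hdown⟩ := ht
  have below : ∀ i ∈ {i | u ++ [i] ∈ t}, ∀ j, 1 ≤ j → j ≤ i → u ++ [j] ∈ t := by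
    intro i hi j hj hji
    induction i, hji using Nat.le_induction with
    | base => exact hi
    | succ i hji ih => exact ih (hdown u i (by omega) hi)
  have pos : ∀ i ∈ {i | u ++ [i] ∈ t}, 1 ≤ i := fun i hi =>
    Nat.one_le_iff_ne_zero.2 fun h => hzero u (h ▸ hi)
  constructor
  · intro hj
    refine ⟨pos j hj, ?_⟩
    calc j = (Set.Icc 1 j).ncard := by simp
      _ ≤ kdeg t u := Set.ncard_le_ncard (fun i hi => below j hj i hi.1 hi.2) hfin
  · rintro ⟨hj1, hjk⟩
    by_contra hj
    have : {i | u ++ [i] ∈ t} ⊆ Set.Icc 1 (j - 1) := fun i hi =>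
      ⟨pos i hi, by by_contra hij; exact hj (below i hi j hj1 (by omega))⟩
    have := Set.ncard_le_ncard this (Set.finite_Icc _ _)
    have hcard : (Set.Icc 1 (j - 1)).ncard = j - 1 := by simp
    rw [kdeg] at hjk
    omega

theorem subtree_mem_TT0 {t : Set (List ℕ)} (ht : t ∈ TT0) {j : ℕ} (hj : [j] ∈ t) :
    subtree t j ∈ TT0 := by
  obtain ⟨⟨-, hpre, hzero, hdown⟩, hfin⟩ := ht
  refine ⟨⟨hj, fun u v hu hv => hpre hu (List.cons_prefix_cons.2 ⟨rfl, hv⟩),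
    fun u => hzero (j :: u), fun u i hi => hdown (j :: u) i hi⟩, ?_⟩
  exact hfin.preimage (List.cons_injective.injOn)

theorem ncard_subtree_lt {t : Set (List ℕ)} (ht : t.Finite) (hnil : [] ∈ t) (j : ℕ) :
    (subtree t j).ncard < t.ncard := by
  calc (subtree t j).ncard = (List.cons j '' subtree t j).ncard :=
        (Set.ncard_image_of_injective _ List.cons_injective).symm
    _ < t.ncard := Set.ncard_lt_ncard
        ⟨fun _ ⟨_, hu, hv⟩ => hv ▸ hu, fun h => by simpa using h hnil⟩ ht

theorem eq_of_subtree_eq {t t' : Set (List ℕ)} (ht : t ∈ TT0) (ht' : t' ∈ TT0)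
    (hk : kdeg t [] = kdeg t' [])
    (hsub : ∀ j, 1 ≤ j → j ≤ kdeg t [] → subtree t j = subtree t' j) :
    t = t' := by
  have child : ∀ {s}, s ∈ TT0 → ∀ {j u}, j :: u ∈ s → 1 ≤ j ∧ j ≤ kdeg s [] := fun hs _ _ hu =>
    (mem_children_iff hs.1 (hs.2.preimage List.singleton_injective.injOn)).1
      (hs.1.2.1 hu ⟨_, rfl⟩)
  ext (_ | ⟨j, u⟩)
  · exact iff_of_true ht.1.1 ht'.1.1
  · constructor
    · intro hu
      obtain ⟨hj1, hjk⟩ := child ht hu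
      exact (hsub j hj1 hjk).subst (motive := fun s => u ∈ s) hu
    · intro hu
      obtain ⟨hj1, hjk⟩ := child ht' hu
      exact (hsub j hj1 (hk ▸ hjk)).symm.subst (motive := fun s => u ∈ s) hu

theorem length_lt_ncard {t : Set (List ℕ)} (ht : IsTree t) (hfin : t.Finite) {u : List ℕ}
    (hu : u ∈ t) : u.length < t.ncard := by
  have hinj : Set.InjOn (u.take ·) (Set.Iic u.length) := fun i hi j hj hij => by
    simpa [min_eq_left (show i ≤ u.length from hi), min_eq_left (show j ≤ u.length from hj)]
      using congrArg List.length hij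
  calc u.length < (Set.Iic u.length).ncard := by simp
    _ = ((u.take ·) '' Set.Iic u.length).ncard := hinj.ncard_image.symm
    _ ≤ t.ncard := Set.ncard_le_ncard
        (Set.image_subset_iff.2 fun i _ => ht.2.1 hu (List.take_prefix i u)) hfin

theorem restrict_eq_self {t : Set (List ℕ)} (ht : IsTree t) {h : ℕ}
    (hlt : ∀ u ∈ restrict h t, u.length < h) : restrict h t = t := by
  refine (Set.sep_subset _ _).antisymm fun u hu => ⟨hu, ?_⟩
  by_contra! hlen
  have := hlt (u.take h) ⟨ht.2.1 hu (List.take_prefix h u), by simp⟩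
  simp [min_eq_left hlen.le] at this

theorem restrict_finite {t : Set (List ℕ)} (ht : t ∈ TT) (h : ℕ) :
    (restrict h t).Finite := by
  induction h with
  | zero => exact (Set.finite_singleton []).subset fun u hu => by simpa using hu.2
  | succ h ih =>
    refine (ih.union (ih.biUnion fun u _ => (ht.2 u).image (u ++ [·]))).subset
      fun v ⟨hv, hlen⟩ => ?_
    rcases hlen.lt_or_eq with hlt | heq
    · exact Or.inl ⟨hv, by omega⟩
    · obtain ⟨u, i, rfl⟩ := List.eq_nil_or_concat v |>.resolve_left (by rintro rfl; simp at heq)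
      rw [List.concat_eq_append] at hv heq
      exact Or.inr (Set.mem_biUnion
        ⟨ht.1.2.1 hv (List.prefix_append u [i]), by simp at heq; omega⟩
        ⟨i, hv, (List.concat_eq_append ..).symm⟩)

theorem restrict_mem_TT0 {t : Set (List ℕ)} (ht : t ∈ TT) (h : ℕ) : restrict h t ∈ TT0 := by
  refine ⟨?_, restrict_finite ht h⟩
  obtain ⟨⟨hnil, hpre, hzero, hdown⟩, -⟩ := ht
  exact ⟨⟨hnil, by simp⟩, fun u v hu hv => ⟨hpre hu.1 hv, hv.length_le.trans hu.2⟩,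
    fun u hu => hzero u hu.1, fun u i hi hu => ⟨hdown u i hi hu.1, by simpa using hu.2⟩⟩

theorem gwWeight_eq_gwWeight0 (p : ℕ → ℝ≥0∞) {h : ℕ} {t : Set (List ℕ)}
    (hlt : ∀ u ∈ t, u.length < h) : gwWeight p h t = gwWeight0 p t := by
  rw [gwWeight, gwWeight0, Set.sep_eq_self_iff_mem_true.2 hlt]

inductive PlanarTree : Type
  | node : List PlanarTree → PlanarTree

namespace PlanarTree

theorem ind {motive : PlanarTree → Prop}
    (node : ∀ ts, (∀ t ∈ ts, motive t) → motive (node ts)) : ∀ T, motive T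
  | .node ts => node ts fun t _ => ind node t

def lukaSeq : PlanarTree → List ℕ
  | node ts => ts.length :: ts.flatMap lukaSeq

theorem isLukasiewicz_flatMap_lukaSeq {ts : List PlanarTree}
    (h : ∀ t ∈ ts, IsLukasiewicz 1 t.lukaSeq) : IsLukasiewicz ts.length (ts.flatMap lukaSeq) := by
  induction ts with
  | nil => exact isLukasiewicz_zero_iff.2 rfl
  | cons t ts ih =>
    rw [List.flatMap_cons, List.length_cons, add_comm]
    exact (h t (by simp)).append (ih fun s hs => h s (by simp [hs]))

theorem isLukasiewicz_lukaSeq : ∀ T : PlanarTree, IsLukasiewicz 1 T.lukaSeq :=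
  ind fun ts ih => by
    rw [lukaSeq, isLukasiewicz_cons_iff, zero_add]
    exact isLukasiewicz_flatMap_lukaSeq ih

theorem exists_flatMap_lukaSeq_eq {k : ℕ} {l : List ℕ} (hl : IsLukasiewicz k l) :
    ∃ ts : List PlanarTree, ts.length = k ∧ ts.flatMap lukaSeq = l := by
  induction l generalizing k with
  | nil => exact ⟨[], by simpa [eq_comm] using isLukasiewicz_nil_iff.1 hl, rfl⟩
  | cons x l ih =>
    obtain ⟨k, rfl⟩ : ∃ k', k = k' + 1 :=
      Nat.exists_eq_add_one.2 (Nat.pos_of_ne_zero fun h => by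
        simp [h, isLukasiewicz_zero_iff] at hl)
    obtain ⟨ts, hlen, hts⟩ := ih (isLukasiewicz_cons_iff.1 hl)
    refine ⟨node (ts.take x) :: ts.drop x, by simp; omega, ?_⟩
    rw [List.flatMap_cons, lukaSeq, List.cons_append, ← List.flatMap_append,
      List.take_append_drop, hts, List.length_take, min_eq_left (by omega)]

theorem exists_lukaSeq_eq {l : List ℕ} (hl : IsLukasiewicz 1 l) :
    ∃ T : PlanarTree, T.lukaSeq = l := by
  obtain ⟨ts, hlen, rfl⟩ := exists_flatMap_lukaSeq_eq hl
  obtain ⟨T, rfl⟩ := List.length_eq_one_iff.1 hlen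
  exact ⟨T, by simp⟩

/-- Reading a Łukasiewicz code backwards, a stack machine rebuilds the tree. -/
def decodeStep (st : List PlanarTree) (x : ℕ) : List PlanarTree := node (st.take x) :: st.drop x

theorem foldl_decodeStep_lukaSeq :
    ∀ (T : PlanarTree) (st : List PlanarTree), T.lukaSeq.reverse.foldl decodeStep st = T :: st :=
  ind fun ts ih st => by
    have forest : ∀ ss ⊆ ts, (ss.flatMap lukaSeq).reverse.foldl decodeStep st = ss ++ st := by
      intro ss hss
      induction ss with
      | nil => rfl
      | cons s ss ihs =>
        rw [List.flatMap_cons, List.reverse_append, List.foldl_append,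
          ihs (List.subset_of_cons_subset hss), ih s (hss (by simp)), List.cons_append]
    rw [lukaSeq, List.reverse_cons, List.foldl_append, forest ts (List.Subset.refl _)]
    simp [decodeStep]

theorem lukaSeq_injective : Function.Injective lukaSeq := fun T T' h => by
  have := foldl_decodeStep_lukaSeq T []
  rw [h, foldl_decodeStep_lukaSeq] at this
  exact (List.singleton_inj.1 this).symm

instance : Countable PlanarTree := lukaSeq_injective.countable

def Mem : List ℕ → PlanarTree → Prop
  | [], _ => True
  | j :: u, node ts => ∃ i : Fin ts.length, j = i + 1 ∧ Mem u ts[i]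

def toNeveu (T : PlanarTree) : Set (List ℕ) := {u | Mem u T}

theorem nil_mem_toNeveu (T : PlanarTree) : [] ∈ toNeveu T := trivial

theorem toNeveu_node (ts : List PlanarTree) :
    toNeveu (node ts) =
      insert [] (⋃ i : Fin ts.length, List.cons ((i : ℕ) + 1) '' toNeveu ts[i]) := by
  ext (_ | ⟨j, u⟩)
  · simp [nil_mem_toNeveu]
  · simp only [Set.mem_insert_iff, reduceCtorEq, false_or, Set.mem_iUnion, Set.mem_image,
      List.cons.injEq]
    exact ⟨fun ⟨i, hj, hu⟩ => ⟨i, u, hu, hj.symm, rfl⟩,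
      fun ⟨i, _, hu, hj, hv⟩ => ⟨i, hj.symm, hv ▸ hu⟩⟩

theorem subtree_toNeveu_node (ts : List PlanarTree) {i : ℕ} (hi : i < ts.length) :
    subtree (toNeveu (node ts)) (i + 1) = toNeveu ts[i] := by
  ext u
  simp only [subtree, toNeveu, Mem, Set.mem_ofPred_eq, add_left_inj]
  exact ⟨fun ⟨j, hj, hu⟩ => by subst hj; exact hu, fun hu => ⟨⟨i, hi⟩, rfl, hu⟩⟩

theorem kdeg_toNeveu_node (ts : List PlanarTree) : kdeg (toNeveu (node ts)) [] = ts.length := by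
  have : {i | [] ++ [i] ∈ toNeveu (node ts)} = Set.Icc 1 ts.length := by
    ext j
    simp only [List.nil_append, toNeveu, Mem, Set.mem_ofPred_eq, Set.mem_Icc, and_true]
    exact ⟨fun ⟨i, hi⟩ => by omega, fun h => ⟨⟨j - 1, by omega⟩, by simp; omega⟩⟩
  rw [kdeg, this]
  simp

theorem toNeveu_finite : ∀ T : PlanarTree, (toNeveu T).Finite :=
  ind fun ts ih => by
    rw [toNeveu_node]
    exact (Set.finite_iUnion fun i => (ih _ (List.getElem_mem _)).image _).insert _

theorem toNeveu_mem_TT0 (T : PlanarTree) : toNeveu T ∈ TT0 := by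
  refine ⟨⟨trivial, ?_, ?_, ?_⟩, toNeveu_finite T⟩
  · intro u v hu ⟨w, hw⟩
    subst hw
    induction v generalizing T with
    | nil => trivial
    | cons j v ih =>
      obtain ⟨ts⟩ := T
      obtain ⟨i, hj, hu⟩ := hu
      exact ⟨i, hj, ih _ hu⟩
  · intro u
    induction u generalizing T with
    | nil => obtain ⟨ts⟩ := T; rintro (⟨i, hi, -⟩ : Mem [0] _); omega
    | cons j u ih =>
      obtain ⟨ts⟩ := T
      rw [List.cons_append]
      rintro ⟨i, -, hu⟩
      exact ih _ hu
  · intro u j hj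
    induction u generalizing T with
    | nil =>
      obtain ⟨ts⟩ := T
      rintro (⟨i, hi, -⟩ : Mem [j + 1] _)
      exact ⟨⟨j - 1, by omega⟩, by simp; omega, trivial⟩
    | cons k u ih =>
      obtain ⟨ts⟩ := T
      rw [List.cons_append, List.cons_append]
      rintro ⟨i, hk, hu⟩
      exact ⟨i, hk, ih _ hu⟩

theorem exists_toNeveu_eq {t : Set (List ℕ)} (ht : t ∈ TT0) : ∃ T, toNeveu T = t := by
  induction hn : t.ncard using Nat.strong_induction_on generalizing t with
  | _ n ih =>
  subst hn
  have hchild : ∀ i : Fin (kdeg t []), [i.1 + 1] ∈ t := fun i =>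
    (mem_children_iff ht.1 (ht.2.preimage List.singleton_injective.injOn)).2 ⟨by omega, i.2⟩
  choose T hT using fun i : Fin (kdeg t []) =>
    ih _ (ncard_subtree_lt ht.2 ht.1.1 _) (subtree_mem_TT0 ht (hchild i)) rfl
  refine ⟨node (List.ofFn T),
    eq_of_subtree_eq (toNeveu_mem_TT0 _) ht (by simp [kdeg_toNeveu_node]) fun j hj1 hjk => ?_⟩
  obtain ⟨i, rfl⟩ : ∃ i, j = i + 1 := ⟨j - 1, by omega⟩
  rw [kdeg_toNeveu_node, List.length_ofFn] at hjk
  rw [subtree_toNeveu_node _ (by simpa using hjk), List.getElem_ofFn, hT]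

@[to_additive]
theorem finprod_mem_insert_nil_iUnion {M : Type*} [CommMonoid M] {k : ℕ}
    {s : Fin k → Set (List ℕ)} (hs : ∀ i, (s i).Finite) (f : List ℕ → M) :
    ∏ᶠ u ∈ insert [] (⋃ i : Fin k, List.cons ((i : ℕ) + 1) '' s i), f u =
      f [] * ∏ i : Fin k, ∏ᶠ u ∈ s i, f (((i : ℕ) + 1) :: u) := by
  have hdisj :
      Pairwise (Function.onFun Disjoint fun i : Fin k => List.cons ((i : ℕ) + 1) '' s i) :=
    fun i j hij => Set.disjoint_left.2 fun _ ⟨_, _, hu⟩ ⟨_, _, hv⟩ =>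
      hij (Fin.ext (by simpa using (List.cons.inj (hu.trans hv.symm)).1))
  rw [finprod_mem_insert _ (by simp) (Set.finite_iUnion fun i => (hs i).image _),
    finprod_mem_iUnion hdisj fun i => (hs i).image _, finprod_eq_prod_of_fintype]
  exact congrArg _ (Finset.prod_congr rfl fun i _ => finprod_mem_image List.cons_injective.injOn)

@[to_additive]
theorem finprod_mem_toNeveu_node {M : Type*} [CommMonoid M] (ts : List PlanarTree)
    (f : List ℕ → M) :
    ∏ᶠ u ∈ toNeveu (node ts), f u =
      f [] * ∏ i : Fin ts.length, ∏ᶠ u ∈ toNeveu ts[i], f ((i + 1) :: u) := by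
  rw [toNeveu_node, finprod_mem_insert_nil_iUnion fun i => toNeveu_finite _]

theorem kdeg_toNeveu_node_cons (ts : List PlanarTree) (i : Fin ts.length) (u : List ℕ) :
    kdeg (toNeveu (node ts)) (((i : ℕ) + 1) :: u) = kdeg (toNeveu ts[i]) u := by
  rw [kdeg_cons, subtree_toNeveu_node _ i.2, Fin.getElem_fin]

theorem ncard_toNeveu : ∀ T : PlanarTree, (toNeveu T).ncard = T.lukaSeq.length :=
  ind fun ts ih => by
    rw [← finsum_one, finsum_mem_toNeveu_node]
    simp_rw [finsum_one, Fin.getElem_fin,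
      fun i : Fin ts.length => ih ts[i.1] (List.getElem_mem _),
      Fin.sum_univ_fun_getElem ts (fun t => t.lukaSeq.length), lukaSeq, List.length_cons,
      List.length_flatMap, add_comm]

theorem gwWeight0_toNeveu (p : ℕ → ℝ≥0∞) :
    ∀ T : PlanarTree, gwWeight0 p (toNeveu T) = (T.lukaSeq.map p).prod :=
  ind fun ts ih => by
    rw [gwWeight0, finprod_mem_toNeveu_node, kdeg_toNeveu_node]
    simp_rw [kdeg_toNeveu_node_cons, ← gwWeight0.eq_1, Fin.getElem_fin,
      fun i : Fin ts.length => ih ts[i.1] (List.getElem_mem _),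
      Fin.prod_univ_fun_getElem ts (fun t => (t.lukaSeq.map p).prod), lukaSeq, List.map_cons,
      List.prod_cons, List.flatMap, List.map_flatten, List.prod_flatten, List.map_map,
      Function.comp_def]

theorem gwWeight_toNeveu_node (p : ℕ → ℝ≥0∞) (h : ℕ) (ts : List PlanarTree) :
    gwWeight p (h + 1) (toNeveu (node ts)) =
      p ts.length * (ts.map fun t => gwWeight p h (toNeveu t)).prod := by
  have hsep : {u ∈ toNeveu (node ts) | u.length < h + 1} =
      insert [] (⋃ i : Fin ts.length,
        List.cons ((i : ℕ) + 1) '' {u ∈ toNeveu ts[i] | u.length < h}) := by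
    rw [toNeveu_node]
    ext (_ | ⟨j, u⟩)
    · simp
    · simp only [Set.mem_ofPred_eq, Set.mem_insert_iff, reduceCtorEq, false_or, Set.mem_iUnion,
        Set.mem_image, List.cons.injEq, List.length_cons, add_lt_add_iff_right]
      exact ⟨fun ⟨⟨i, v, hv, hj, huv⟩, hl⟩ => ⟨i, v, ⟨hv, huv ▸ hl⟩, hj, huv⟩,
        fun ⟨i, v, ⟨hv, hl⟩, hj, huv⟩ => ⟨⟨i, v, hv, hj, huv⟩, huv ▸ hl⟩⟩
  rw [gwWeight, hsep, finprod_mem_insert_nil_iUnion (fun i => (toNeveu_finite _).sep _),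
    kdeg_toNeveu_node]
  simp_rw [kdeg_toNeveu_node_cons]
  exact congrArg _ (Fin.prod_univ_fun_getElem ts fun t => gwWeight p h (toNeveu t))

theorem heightLe_succ_toNeveu_node_iff {h : ℕ} {ts : List PlanarTree} :
    heightLe (h + 1) (toNeveu (node ts)) ↔ ∀ t ∈ ts, heightLe h (toNeveu t) := by
  change toNeveu (node ts) ⊆ {u | u.length ≤ h + 1} ↔
    ∀ t ∈ ts, toNeveu t ⊆ {u | u.length ≤ h}
  rw [toNeveu_node, Set.insert_subset_iff, Set.iUnion_subset_iff]
  simp [Set.image_subset_iff, List.forall_mem_iff_getElem, Fin.forall_iff]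

theorem heightLe_zero_toNeveu_iff {T : PlanarTree} : heightLe 0 (toNeveu T) ↔ T = node [] := by
  constructor
  · obtain ⟨_ | ⟨t, ts⟩⟩ := T
    · exact fun _ => rfl
    · exact fun h => absurd (h [1] ⟨⟨0, by simp⟩, rfl, trivial⟩) (by simp)
  · rintro rfl (_ | ⟨j, u⟩) hu
    · rfl
    · obtain ⟨⟨i, hi⟩, -⟩ := hu
      simp at hi

/-- `P(r_h τ = T)` for a GW tree `τ` with offspring distribution `p`. -/
def restrictProb (p : ℕ → ℝ≥0∞) (h : ℕ) (T : PlanarTree) : ℝ≥0∞ :=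
  if heightLe h (toNeveu T) then gwWeight p h (toNeveu T) else 0

theorem restrictProb_zero (p : ℕ → ℝ≥0∞) (T : PlanarTree) :
    restrictProb p 0 T = if T = node [] then 1 else 0 := by
  simp [restrictProb, heightLe_zero_toNeveu_iff, gwWeight]

theorem restrictProb_node (p : ℕ → ℝ≥0∞) (h : ℕ) (ts : List PlanarTree) :
    restrictProb p (h + 1) (node ts) = p ts.length * (ts.map (restrictProb p h)).prod := by
  by_cases hts : ∀ t ∈ ts, heightLe h (toNeveu t)
  · rw [restrictProb, if_pos (heightLe_succ_toNeveu_node_iff.2 hts), gwWeight_toNeveu_node]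
    congr 2
    exact List.map_congr_left fun t ht => (if_pos (hts t ht)).symm
  · obtain ⟨t, ht, htall⟩ := not_forall₂.1 hts
    rw [restrictProb, if_neg (mt heightLe_succ_toNeveu_node_iff.1 hts),
      List.prod_eq_zero (List.mem_map.2 ⟨t, ht, if_neg htall⟩), mul_zero]

theorem length_lt_of_mem_toNeveu {T : PlanarTree} {u : List ℕ} (hu : u ∈ toNeveu T) :
    u.length < T.lukaSeq.length :=
  ncard_toNeveu T ▸ length_lt_ncard (toNeveu_mem_TT0 T).1 (toNeveu_finite T) hu

theorem tsum_restrictProb {p : ℕ → ℝ≥0∞} (hp : ∑' n, p n = 1) (h : ℕ) :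
    ∑' T, restrictProb p h T = 1 := by
  induction h with
  | zero =>
    simp_rw [restrictProb_zero]
    simp
  | succ h ih =>
    let e : List PlanarTree ≃ PlanarTree :=
      ⟨node, fun | node ts => ts, fun _ => rfl, fun | node _ => rfl⟩
    rw [← e.tsum_eq]
    simp_rw [e, Equiv.coe_fn_mk, restrictProb_node, tsum_mul_prod_map, ih, one_pow, mul_one, hp]

theorem tsum_lukaSeq_eq (w : List ℕ → ℝ≥0∞) (n : ℕ) :
    ∑' T : {T : PlanarTree | T.lukaSeq.length = n}, w T.1.lukaSeq =
      ∑' l : {l : List ℕ | IsLukasiewicz 1 l ∧ l.length = n}, w l := by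
  rw [tsum_subtype _ fun T : PlanarTree => w T.lukaSeq, tsum_subtype,
    ← lukaSeq_injective.tsum_eq fun l hl => exists_lukaSeq_eq (Set.mem_of_indicator_ne_zero hl).1]
  refine tsum_congr fun T => ?_
  simp [Set.indicator_apply, isLukasiewicz_lukaSeq]

end PlanarTree

open PlanarTree in
theorem finite_and_ncard_eq_iff {t : Set (List ℕ)} (ht : t ∈ TT) {n : ℕ} :
    t.Finite ∧ t.ncard = n ↔
      ∃ T : PlanarTree, T.lukaSeq.length = n ∧ restrict n t = toNeveu T := by
  constructor
  · rintro ⟨hfin, rfl⟩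
    obtain ⟨T, rfl⟩ := exists_toNeveu_eq ⟨ht.1, hfin⟩
    exact ⟨T, (ncard_toNeveu T).symm,
      restrict_eq_self ht.1 fun u hu => length_lt_ncard ht.1 hfin hu.1⟩
  · rintro ⟨T, rfl, hT⟩
    have hlt : ∀ u ∈ restrict T.lukaSeq.length t, u.length < T.lukaSeq.length := by
      rw [hT]
      exact fun u hu => length_lt_of_mem_toNeveu hu
    rw [← restrict_eq_self ht.1 hlt, hT]
    exact ⟨toNeveu_finite T, ncard_toNeveu T⟩

/-- The sets `A i` need not be measurable: covering the space with total mass at most `P univ`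
forces additivity of the outer measure on every subfamily. -/
theorem measure_biUnion_eq_tsum_of_cover {Ω ι : Type*} [MeasurableSpace Ω] [Countable ι]
    (P : Measure Ω) [IsFiniteMeasure P] {A : ι → Set Ω} (hcover : ∀ ω, ∃ i, ω ∈ A i)
    (htot : ∑' i, P (A i) ≤ P Set.univ) (s : Set ι) :
    P (⋃ i ∈ s, A i) = ∑' i : s, P (A i) := by
  set U := ⋃ i ∈ s, A i
  refine le_antisymm (measure_biUnion_le P s.to_countable A) ?_
  have hcompl : P Uᶜ ≤ ∑' i : ↥sᶜ, P (A i) := by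
    refine (measure_mono fun ω hω => ?_).trans (measure_biUnion_le P sᶜ.to_countable A)
    obtain ⟨i, hi⟩ := hcover ω
    exact Set.mem_biUnion (fun his => hω (Set.mem_biUnion his hi)) hi
  have hfin : ∑' i : ↥sᶜ, P (A i) ≠ ∞ :=
    ne_top_of_le_ne_top (measure_ne_top P _)
      ((ENNReal.tsum_comp_le_tsum_of_injective Subtype.val_injective _).trans htot)
  refine ENNReal.le_of_add_le_add_right hfin ?_
  calc ∑' i : s, P (A i) + ∑' i : ↥sᶜ, P (A i) = ∑' i, P (A i) :=
        Summable.tsum_add_tsum_compl (f := fun i => P (A i)) ENNReal.summable ENNReal.summable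
    _ ≤ P U + P Uᶜ := htot.trans (measure_univ_le_add_compl U)
    _ ≤ P U + ∑' i : ↥sᶜ, P (A i) := add_le_add_right hcompl _

section GaltonWatson

variable {Ω : Type*} [MeasurableSpace Ω] {P : Measure Ω} {p : ℕ → ℝ≥0∞} {τ : Ω → Set (List ℕ)}

open PlanarTree

theorem IsGW.measure_restrict_eq (hτ : IsGW P p τ) {h : ℕ} (hh : 1 ≤ h) (T : PlanarTree) :
    P {ω | restrict h (τ ω) = toNeveu T} = restrictProb p h T := by
  rw [restrictProb]
  split_ifs with hT
  · exact hτ.2 h hh _ (toNeveu_mem_TT0 T) hT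
  · convert measure_empty (μ := P)
    exact Set.eq_empty_of_forall_notMem fun ω hω => hT (hω ▸ fun u hu => hu.2)

theorem IsGW.measure_finite_ncard_eq [IsProbabilityMeasure P] (hτ : IsGW P p τ)
    (hp : ∑' n, p n = 1) {n : ℕ} (hn : 1 ≤ n) :
    P {ω | (τ ω).Finite ∧ (τ ω).ncard = n} =
      ∑' T : {T : PlanarTree | T.lukaSeq.length = n}, (T.1.lukaSeq.map p).prod := by
  have hevent : {ω | (τ ω).Finite ∧ (τ ω).ncard = n} =
      ⋃ T ∈ {T : PlanarTree | T.lukaSeq.length = n}, {ω | restrict n (τ ω) = toNeveu T} := by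
    ext ω
    simp [finite_and_ncard_eq_iff (hτ.1 ω)]
  have hcover (ω : Ω) : ∃ T, ω ∈ {ω | restrict n (τ ω) = toNeveu T} :=
    (exists_toNeveu_eq (restrict_mem_TT0 (hτ.1 ω) n)).imp fun _ hT => hT.symm
  rw [hevent, measure_biUnion_eq_tsum_of_cover P hcover (by
    simp_rw [hτ.measure_restrict_eq hn, tsum_restrictProb hp, measure_univ, le_refl])]
  refine tsum_congr fun T => ?_
  have hlt : ∀ u ∈ toNeveu T, u.length < n := fun u hu => T.2 ▸ length_lt_of_mem_toNeveu hu
  rw [hτ.measure_restrict_eq hn, restrictProb,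
    if_pos (show heightLe n (toNeveu T) from fun u hu => (hlt u hu).le),
    gwWeight_eq_gwWeight0 p hlt, gwWeight0_toNeveu]

end GaltonWatson

section RandomWalk

variable {Ω' : Type*} [MeasurableSpace Ω'] {P' : Measure Ω'} {p : ℕ → ℝ≥0∞} {ζ : ℕ → Ω' → ℕ}

theorem measure_ofFn_eq (hindep : iIndepFun ζ P') (hlaw : ∀ k j, P' {ω | ζ k ω = j} = p j)
    (n : ℕ) (l : List ℕ) :
    P' {ω | List.ofFn (fun i : Fin n => ζ i ω) = l} =
      {l : List ℕ | l.length = n}.indicator (fun l => (l.map p).prod) l := by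
  by_cases hl : l.length = n
  · subst hl
    have hevent : {ω | List.ofFn (fun i : Fin l.length => ζ i ω) = l} =
        ⋂ k ∈ Finset.range l.length, ζ k ⁻¹' {l.getD k 0} := by
      ext ω
      simp only [Set.mem_ofPred_eq, List.ext_getElem_iff, List.length_ofFn, List.getElem_ofFn,
        true_and, Set.mem_iInter, Finset.mem_range, Set.mem_preimage, Set.mem_singleton_iff]
      exact forall₂_congr fun i hi => by simp [hi]
    rw [Set.indicator_of_mem (show l ∈ {l' : List ℕ | l'.length = l.length} from rfl), hevent,
      hindep.measure_inter_preimage_eq_mul _ fun _ _ => measurableSet_singleton _,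
      Finset.prod_range, ← Fin.prod_univ_fun_getElem]
    exact Finset.prod_congr rfl fun i _ => by rw [← hlaw, List.getD_eq_getElem _ _ i.2]; rfl
  · rw [Set.indicator_of_notMem (show l ∉ {l' : List ℕ | l'.length = n} from hl)]
    convert measure_empty (μ := P')
    exact Set.eq_empty_of_forall_notMem fun ω hω => hl (hω ▸ List.length_ofFn)

theorem measure_sum_range_eq [IsProbabilityMeasure P'] (hp : ∑' n, p n = 1)
    (hindep : iIndepFun ζ P') (hlaw : ∀ k j, P' {ω | ζ k ω = j} = p j) {n : ℕ} (hn : 1 ≤ n) :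
    P' {ω | ∑ k ∈ Finset.range n, ζ k ω = n - 1} =
      ∑' l : {l : List ℕ | l.length = n ∧ l.sum + 1 = n}, (l.1.map p).prod := by
  have hevent : {ω | ∑ k ∈ Finset.range n, ζ k ω = n - 1} =
      ⋃ l ∈ {l : List ℕ | l.length = n ∧ l.sum + 1 = n},
        {ω | List.ofFn (fun i : Fin n => ζ i ω) = l} := by
    ext ω
    simp only [Set.mem_ofPred_eq, Set.mem_iUnion, exists_prop, exists_eq_right', List.length_ofFn,
      List.sum_ofFn, Fin.sum_univ_eq_sum_range (ζ · ω), true_and]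
    omega
  rw [hevent, measure_biUnion_eq_tsum_of_cover P'
    (A := fun l : List ℕ => {ω | List.ofFn (fun i : Fin n => ζ i ω) = l}) (fun ω => ⟨_, rfl⟩) (by
    simp_rw [measure_ofFn_eq hindep hlaw, ← tsum_subtype]
    rw [show ∑' l : ↥{l : List ℕ | l.length = n}, (l.1.map p).prod = (∑' a, p a) ^ n from
      tsum_prod_map_of_length p n, hp, one_pow, measure_univ])]
  exact tsum_congr fun l => by
    rw [measure_ofFn_eq hindep hlaw,
      Set.indicator_of_mem (s := {l' : List ℕ | l'.length = n}) l.2.1]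

end RandomWalk

theorem dwass_formula_general
    {Ω : Type*} [MeasurableSpace Ω] (P : Measure Ω) [IsProbabilityMeasure P]
    {Ω' : Type*} [MeasurableSpace Ω'] (P' : Measure Ω') [IsProbabilityMeasure P']
    (p : ℕ → ℝ≥0∞) (hp : ∑' n, p n = 1)
    (τ : Ω → Set (List ℕ)) (hτ : IsGW P p τ)
    (ζ : ℕ → Ω' → ℕ)
    (hindep : iIndepFun ζ P')
    (hlaw : ∀ (k : ℕ) (j : ℕ), P' {ω | ζ k ω = j} = p j)
    (n : ℕ) (hn : 1 ≤ n) :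
    P {ω | (τ ω).Finite ∧ (τ ω).ncard = n} =
      (n : ℝ≥0∞)⁻¹ * P' {ω | ∑ k ∈ Finset.range n, ζ k ω = n - 1} := by
  rw [hτ.measure_finite_ncard_eq hp hn, PlanarTree.tsum_lukaSeq_eq (fun l => (l.map p).prod),
    measure_sum_range_eq hp hindep hlaw hn,
    tsum_cycle_lemma (fun l => (l.map p).prod) fun l r => ((List.rotate_perm l r).map p).prod_eq,
    ← mul_assoc,
    ENNReal.inv_mul_cancel (by exact_mod_cast (by omega : n ≠ 0)) (ENNReal.natCast_ne_top n),
    one_mul]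

/-- Dwass formula: let `τ` be a GW tree with critical or sub-critical
offspring distribution `p`, and `(ζ_k)` i.i.d. with law `p`, `S_n = ζ_1 + ⋯ + ζ_n`.
Then for every `n ≥ 1`, `P(|τ| = n) = (1/n) P(S_n = n - 1)`. -/
theorem dwass_formula
    {Ω : Type*} [MeasurableSpace Ω] (P : Measure Ω) [IsProbabilityMeasure P]
    {Ω' : Type*} [MeasurableSpace Ω'] (P' : Measure Ω') [IsProbabilityMeasure P']
    (p : ℕ → ℝ≥0∞) (hp : ∑' n, p n = 1)
    (hmean : ∑' n : ℕ, (n : ℝ≥0∞) * p n ≤ 1)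
    (τ : Ω → Set (List ℕ)) (hτ : IsGW P p τ)
    (ζ : ℕ → Ω' → ℕ)
    (hmeas : ∀ k, Measurable (ζ k))
    (hindep : iIndepFun ζ P')
    (hlaw : ∀ (k : ℕ) (j : ℕ), P' {ω | ζ k ω = j} = p j)
    (n : ℕ) (hn : 1 ≤ n) :
    P {ω | (τ ω).Finite ∧ (τ ω).ncard = n} =
      (n : ℝ≥0∞)⁻¹ * P' {ω | ∑ k ∈ Finset.range n, ζ k ω = n - 1} :=
  dwass_formula_general P P' p hp τ hτ ζ hindep hlaw n hn

end GWPaper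
end
end

section
/- Let p be a sub-critical offspring distribution satisfying (H) and 𝒜 ⊆ ℕ with p(𝒜) > 0. Then there exists at most one θ ∈ I_𝒜 such that m^𝒜(θ) = 1, where m^𝒜(θ) denotes the mean of the probability distribution p_θ^𝒜. -/
/-!
Suppose `m^𝒜(θ₁) = m^𝒜(θ₂) = 1` with `θ₁ ≠ θ₂`. Then `π = p_{θ₁}^𝒜` is a probability
distribution with mean `1`, and it is not `δ₁` (its mass at `0` can only vanish when
`c_𝒜(θ₁) = 0`, and then `p(1) < 1` rules out `δ₁`). For such `π`, summing the tangent-line inequalities `y^{k-1} ≥ 1 + (k-1)(y-1)`, strict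
for `k ∉ {1, 2}`, gives `∑ π(k) y^{k-1} > 1` for every `y ∈ (0, ∞) \ {1}`. With `y = θ₂ / θ₁` the
left-hand side is `∑_{k∉𝒜} θ₂^{k-1} p(k) + c_𝒜(θ₁) ∑_{k∈𝒜} θ₂^{k-1} p(k)`, whereas the same
expression with `c_𝒜(θ₂)` in place of `c_𝒜(θ₁)` equals `1`. Hence `c_𝒜(θ₂) < c_𝒜(θ₁)`, and by
symmetry `c_𝒜(θ₁) < c_𝒜(θ₂)`.
-/

open scoped ENNReal Classical

noncomputable section

namespace GWPaper

/-- `∑_{k ∈ 𝒜} θ^{k-1} p(k)`. -/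
def sumIn (p : ℕ → ℝ≥0∞) (A : Set ℕ) (θ : ℝ≥0∞) : ℝ≥0∞ :=
  ∑' k : ℕ, if k ∈ A then θ ^ ((k : ℤ) - 1) * p k else 0

/-- `∑_{k ∉ 𝒜} θ^{k-1} p(k)`. -/
def sumOut (p : ℕ → ℝ≥0∞) (A : Set ℕ) (θ : ℝ≥0∞) : ℝ≥0∞ :=
  ∑' k : ℕ, if k ∉ A then θ ^ ((k : ℤ) - 1) * p k else 0

/-- `θ ∈ I_𝒜`: `θ > 0` (and finite), `∑_{k ∈ 𝒜} θ^{k-1} p(k) < ∞` and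
`∑_{k ∉ 𝒜} θ^{k-1} p(k) ≤ 1`. -/
def memI (p : ℕ → ℝ≥0∞) (A : Set ℕ) (θ : ℝ≥0∞) : Prop :=
  0 < θ ∧ θ ≠ ∞ ∧ sumIn p A θ ≠ ∞ ∧ sumOut p A θ ≤ 1

/-- The normalizing constant `c_𝒜(θ)`. -/
def cA (p : ℕ → ℝ≥0∞) (A : Set ℕ) (θ : ℝ≥0∞) : ℝ≥0∞ :=
  (1 - sumOut p A θ) / sumIn p A θ

/-- The modified offspring distribution `p_θ^𝒜`. -/
def pTheta (p : ℕ → ℝ≥0∞) (A : Set ℕ) (θ : ℝ≥0∞) (k : ℕ) : ℝ≥0∞ :=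
  if k ∈ A then cA p A θ * (θ ^ ((k : ℤ) - 1) * p k) else θ ^ ((k : ℤ) - 1) * p k

/-- `m^𝒜(θ)`: the mean of `p_θ^𝒜`. -/
def meanA (p : ℕ → ℝ≥0∞) (A : Set ℕ) (θ : ℝ≥0∞) : ℝ≥0∞ :=
  ∑' k : ℕ, (k : ℝ≥0∞) * pTheta p A θ k

end GWPaper

-- The tangent-line inequality `y^{k-1} ≥ 1 + (k-1)(y-1)`, rearranged so that it has no
-- subtraction and makes sense in `ℝ≥0∞`.
theorem Real.mul_add_two_le_zpow_sub_one_add {y : ℝ} (hy : 0 < y) (k : ℕ) :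
    k * y + 2 ≤ y ^ ((k : ℤ) - 1) + k + y := by
  rcases k with _ | n
  · have hsq : 0 ≤ (y - 1) ^ 2 / y := by positivity
    have : (y - 1) ^ 2 / y = y⁻¹ + y - 2 := by field_simp; ring
    simp only [CharP.cast_eq_zero, zero_sub, zpow_neg, zpow_one]
    linarith
  · have hb := one_add_mul_sub_le_pow (by linarith : (-1 : ℝ) ≤ y) n
    simp only [Nat.cast_add, Nat.cast_one, add_sub_cancel_right, zpow_natCast]
    linarith

theorem Real.mul_add_two_lt_zpow_sub_one_add {y : ℝ} (hy : 0 < y) (hy1 : y ≠ 1) {k : ℕ}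
    (hk1 : k ≠ 1) (hk2 : k ≠ 2) : k * y + 2 < y ^ ((k : ℤ) - 1) + k + y := by
  have hy1' : y - 1 ≠ 0 := sub_ne_zero.2 hy1
  rcases k with _ | _ | _ | n
  · have hsq : 0 < (y - 1) ^ 2 / y := by positivity
    have : (y - 1) ^ 2 / y = y⁻¹ + y - 2 := by field_simp; ring
    simp only [CharP.cast_eq_zero, zero_sub, zpow_neg, zpow_one]
    linarith
  · exact absurd rfl hk1
  · exact absurd rfl hk2
  · have hb := one_add_mul_self_lt_rpow_one_add (by linarith : (-1 : ℝ) ≤ y - 1) hy1'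
      (by norm_cast; omega : (1 : ℝ) < (n + 2 : ℕ))
    rw [add_sub_cancel, Real.rpow_natCast] at hb
    rw [show ((n + 3 : ℕ) : ℤ) - 1 = ((n + 2 : ℕ) : ℤ) by push_cast; ring, zpow_natCast]
    push_cast at hb ⊢
    linarith

namespace ENNReal

theorem mul_zpow_of_ne {a b : ℝ≥0∞} (ha0 : a ≠ 0) (ha : a ≠ ∞) (hb0 : b ≠ 0) (hb : b ≠ ∞)
    (n : ℤ) : (a * b) ^ n = a ^ n * b ^ n := by
  lift a to NNReal using ha
  lift b to NNReal using hb
  have ha0' : a ≠ 0 := by exact_mod_cast ha0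
  have hb0' : b ≠ 0 := by exact_mod_cast hb0
  rw [← coe_mul, ← coe_zpow (mul_ne_zero ha0' hb0'), ← coe_zpow ha0', ← coe_zpow hb0',
    ← coe_mul, mul_zpow]

theorem mul_add_two_le_zpow_sub_one_add {y : ℝ≥0∞} (hy0 : y ≠ 0) (hy : y ≠ ∞) (k : ℕ) :
    k * y + 2 ≤ y ^ ((k : ℤ) - 1) + k + y := by
  lift y to NNReal using hy
  have hy0' : y ≠ 0 := by exact_mod_cast hy0
  rw [← coe_zpow hy0']
  exact_mod_cast Real.mul_add_two_le_zpow_sub_one_add (NNReal.coe_pos.2 hy0'.bot_lt) k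

theorem mul_add_two_lt_zpow_sub_one_add {y : ℝ≥0∞} (hy0 : y ≠ 0) (hy : y ≠ ∞) (hy1 : y ≠ 1)
    {k : ℕ} (hk1 : k ≠ 1) (hk2 : k ≠ 2) : k * y + 2 < y ^ ((k : ℤ) - 1) + k + y := by
  lift y to NNReal using hy
  have hy0' : y ≠ 0 := by exact_mod_cast hy0
  have hy1' : (y : ℝ) ≠ 1 := by exact_mod_cast hy1
  rw [← coe_zpow hy0']
  exact_mod_cast Real.mul_add_two_lt_zpow_sub_one_add (NNReal.coe_pos.2 hy0'.bot_lt) hy1' hk1 hk2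

end ENNReal

section CriticalDistribution

variable {π : ℕ → ℝ≥0∞}

theorem exists_ne_one_ne_two_of_mean_eq_one (hπ : ∑' k, π k = 1)
    (hmean : ∑' k : ℕ, (k : ℝ≥0∞) * π k = 1) (hne : ∃ j ≠ 1, π j ≠ 0) :
    ∃ k, k ≠ 1 ∧ k ≠ 2 ∧ π k ≠ 0 := by
  by_contra! h
  have hsupp : ∀ k ∉ ({1, 2} : Finset ℕ), π k = 0 := by
    intro k hk
    simp only [Finset.mem_insert, Finset.mem_singleton, not_or] at hk
    exact h k hk.1 hk.2
  have hsum : π 1 + π 2 = 1 := by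
    rw [← hπ, tsum_eq_sum hsupp, Finset.sum_pair (by norm_num)]
  have hsum' : π 1 + 2 * π 2 = 1 := by
    rw [← hmean, tsum_eq_sum fun k hk => by rw [hsupp k hk, mul_zero],
      Finset.sum_pair (by norm_num)]
    norm_num
  have hπ1 : π 1 ≠ ∞ := ne_top_of_le_ne_top ENNReal.one_ne_top (hsum ▸ le_self_add)
  have hπ2 : π 2 ≠ ∞ := ne_top_of_le_ne_top ENNReal.one_ne_top (hsum ▸ le_add_self)
  have h2 : π 2 = 0 := by
    have hdouble : π 2 = π 2 + π 2 := by
      rw [← two_mul]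
      exact (ENNReal.add_right_inj hπ1).1 (hsum.trans hsum'.symm)
    exact ((ENNReal.add_right_inj hπ2).1 ((add_zero _).trans hdouble)).symm
  obtain ⟨j, hj1, hj⟩ := hne
  exact hj (if hj2 : j = 2 then hj2 ▸ h2 else h j hj1 hj2)

theorem one_lt_tsum_mul_zpow_sub_one_of_mean_eq_one (hπ : ∑' k, π k = 1)
    (hmean : ∑' k : ℕ, (k : ℝ≥0∞) * π k = 1) (hne : ∃ j ≠ 1, π j ≠ 0) {y : ℝ≥0∞} (hy0 : y ≠ 0)
    (hy : y ≠ ∞) (hy1 : y ≠ 1) : 1 < ∑' k, π k * y ^ ((k : ℤ) - 1) := by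
  obtain ⟨k₀, hk1, hk2, hk₀⟩ := exists_ne_one_ne_two_of_mean_eq_one hπ hmean hne
  have hlhs : ∑' k, π k * (k * y + 2) = y + 2 := by
    calc ∑' k, π k * (k * y + 2) = ∑' k : ℕ, k * π k * y + ∑' k, π k * 2 := by
          rw [← ENNReal.tsum_add]
          exact tsum_congr fun k => by ring
      _ = y + 2 := by
          rw [ENNReal.tsum_mul_right, ENNReal.tsum_mul_right, hmean, hπ, one_mul, one_mul]
  have hrhs : ∑' k, π k * (y ^ ((k : ℤ) - 1) + k + y)
      = ∑' k, π k * y ^ ((k : ℤ) - 1) + 1 + y := by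
    calc ∑' k, π k * (y ^ ((k : ℤ) - 1) + k + y)
          = ∑' k, π k * y ^ ((k : ℤ) - 1) + ∑' k : ℕ, k * π k + ∑' k, π k * y := by
          rw [← ENNReal.tsum_add, ← ENNReal.tsum_add]
          exact tsum_congr fun k => by ring
      _ = ∑' k, π k * y ^ ((k : ℤ) - 1) + 1 + y := by
          rw [ENNReal.tsum_mul_right, hmean, hπ, one_mul]
  have hlt : ∑' k, π k * (k * y + 2) < ∑' k, π k * (y ^ ((k : ℤ) - 1) + k + y) := by
    refine ENNReal.tsum_lt_tsum (i := k₀) (by simp [hlhs, hy]) (fun k => ?_) ?_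
    · exact mul_le_mul_of_nonneg_left (ENNReal.mul_add_two_le_zpow_sub_one_add hy0 hy k) zero_le
    · exact ENNReal.mul_lt_mul_right hk₀
        (ENNReal.ne_top_of_tsum_ne_top (hπ ▸ ENNReal.one_ne_top) k₀)
        (ENNReal.mul_add_two_lt_zpow_sub_one_add hy0 hy hy1 hk1 hk2)
  rw [hlhs, hrhs] at hlt
  have hlt' : (1 + y) + 1 < (1 + y) + ∑' k, π k * y ^ ((k : ℤ) - 1) := by
    convert hlt using 1 <;> ring
  exact (ENNReal.add_lt_add_iff_left (by simp [hy])).1 hlt'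

end CriticalDistribution

namespace GWPaper

variable {p : ℕ → ℝ≥0∞} {A : Set ℕ} {θ : ℝ≥0∞}

theorem sumIn_ne_zero (hpA : 0 < ∑' k : ℕ, (if k ∈ A then p k else 0)) (hθ0 : θ ≠ 0)
    (hθ : θ ≠ ∞) : sumIn p A θ ≠ 0 := by
  intro h
  refine hpA.ne' (ENNReal.tsum_eq_zero.2 fun k => ?_)
  have hk := ENNReal.tsum_eq_zero.1 h k
  split_ifs at hk ⊢ with hkA
  · exact (mul_eq_zero.1 hk).resolve_left (ENNReal.zpow_pos hθ0 hθ _).ne'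
  · rfl

theorem sumOut_add_cA_mul_sumIn (hpA : 0 < ∑' k : ℕ, (if k ∈ A then p k else 0))
    (hθ : memI p A θ) : sumOut p A θ + cA p A θ * sumIn p A θ = 1 := by
  obtain ⟨hθ0, hθtop, hIn, hOut⟩ := hθ
  rw [cA, ENNReal.div_mul_cancel (sumIn_ne_zero hpA hθ0.ne' hθtop) hIn,
    add_tsub_cancel_of_le hOut]

theorem tsum_pTheta_mul_zpow (hθ0 : θ ≠ 0) (hθ : θ ≠ ∞) {y : ℝ≥0∞} (hy0 : y ≠ 0)
    (hy : y ≠ ∞) :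
    ∑' k, pTheta p A θ k * y ^ ((k : ℤ) - 1)
      = sumOut p A (θ * y) + cA p A θ * sumIn p A (θ * y) := by
  rw [sumOut, sumIn, ← ENNReal.tsum_mul_left, ← ENNReal.tsum_add]
  refine tsum_congr fun k => ?_
  rw [ENNReal.mul_zpow_of_ne hθ0 hθ hy0 hy]
  by_cases hk : k ∈ A <;> simp only [pTheta, hk, if_true, if_false, not_true, not_false_eq_true,
    mul_zero, zero_add, add_zero] <;> ring

theorem tsum_pTheta (hpA : 0 < ∑' k : ℕ, (if k ∈ A then p k else 0)) (hθ : memI p A θ) :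
    ∑' k, pTheta p A θ k = 1 := by
  have hone (n : ℤ) : (1 : ℝ≥0∞) ^ n = 1 := by
    rw [← ENNReal.coe_one, ← ENNReal.coe_zpow one_ne_zero, one_zpow]
  rw [← sumOut_add_cA_mul_sumIn hpA hθ]
  simpa [hone] using
    tsum_pTheta_mul_zpow (p := p) (A := A) hθ.1.ne' hθ.2.1 one_ne_zero ENNReal.one_ne_top

theorem exists_ne_one_pTheta_ne_zero (hp0 : p 0 ≠ 0) (hp1 : p 1 < 1)
    (hpA : 0 < ∑' k : ℕ, (if k ∈ A then p k else 0)) (hθ : memI p A θ) :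
    ∃ j ≠ 1, pTheta p A θ j ≠ 0 := by
  by_contra! h
  have h1 : pTheta p A θ 1 = 1 := by rw [← tsum_pTheta hpA hθ, tsum_eq_single 1 h]
  have h0 := h 0 zero_ne_one
  have hterm0 : θ ^ (((0 : ℕ) : ℤ) - 1) * p 0 ≠ 0 :=
    mul_ne_zero (ENNReal.zpow_pos hθ.1.ne' hθ.2.1 _).ne' hp0
  unfold pTheta at h0 h1
  split_ifs at h0 with hA0
  · have hc : cA p A θ = 0 := (mul_eq_zero.1 h0).resolve_right hterm0
    split_ifs at h1 with hA1
    · rw [hc, zero_mul] at h1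
      exact zero_ne_one h1
    · simp only [Nat.cast_one, sub_self, zpow_zero, one_mul] at h1
      exact hp1.ne h1
  · exact hterm0 h0

theorem cA_lt_cA_of_ne {θ₁ θ₂ : ℝ≥0∞} (hp0 : p 0 ≠ 0) (hp1 : p 1 < 1)
    (hpA : 0 < ∑' k : ℕ, (if k ∈ A then p k else 0)) (h₁ : memI p A θ₁) (h₂ : memI p A θ₂)
    (hmean : meanA p A θ₁ = 1) (hne : θ₁ ≠ θ₂) : cA p A θ₂ < cA p A θ₁ := by
  have hy0 : θ₂ / θ₁ ≠ 0 := (ENNReal.div_pos h₂.1.ne' h₁.2.1).ne'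
  have hy : θ₂ / θ₁ ≠ ∞ := ENNReal.div_ne_top h₂.2.1 h₁.1.ne'
  have hy1 : θ₂ / θ₁ ≠ 1 := fun h => hne ((ENNReal.div_eq_one_iff h₁.1.ne' h₁.2.1).1 h).symm
  have key := one_lt_tsum_mul_zpow_sub_one_of_mean_eq_one (tsum_pTheta hpA h₁) hmean
    (exists_ne_one_pTheta_ne_zero hp0 hp1 hpA h₁) hy0 hy hy1
  rw [tsum_pTheta_mul_zpow h₁.1.ne' h₁.2.1 hy0 hy, ENNReal.mul_div_cancel h₁.1.ne' h₁.2.1,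
    ← sumOut_add_cA_mul_sumIn hpA h₂] at key
  have hOut : sumOut p A θ₂ ≠ ∞ := ne_top_of_le_ne_top ENNReal.one_ne_top h₂.2.2.2
  exact lt_of_mul_lt_mul_right' ((ENNReal.add_lt_add_iff_left hOut).1 key)

theorem unique_critical_theta_general
    (p : ℕ → ℝ≥0∞)
    (hp0 : 0 < p 0) (hp01 : p 0 + p 1 < 1)
    (A : Set ℕ) (hpA : 0 < ∑' k : ℕ, (if k ∈ A then p k else 0)) :
    ∀ θ₁ θ₂ : ℝ≥0∞, memI p A θ₁ → memI p A θ₂ →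
      meanA p A θ₁ = 1 → meanA p A θ₂ = 1 → θ₁ = θ₂ := by
  intro θ₁ θ₂ h₁ h₂ hmean₁ hmean₂
  by_contra hne
  have hp1 : p 1 < 1 := le_add_self.trans_lt hp01
  exact lt_asymm (cA_lt_cA_of_ne hp0.ne' hp1 hpA h₁ h₂ hmean₁ hne)
    (cA_lt_cA_of_ne hp0.ne' hp1 hpA h₂ h₁ hmean₂ (Ne.symm hne))

/-- for a sub-critical offspring distribution `p` satisfying (H) and
`𝒜 ⊆ ℕ` with `p(𝒜) > 0`, there is at most one `θ ∈ I_𝒜` with `m^𝒜(θ) = 1`. -/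
theorem unique_critical_theta
    (p : ℕ → ℝ≥0∞) (hp : ∑' n, p n = 1)
    (hp0 : 0 < p 0) (hp0' : p 0 < 1) (hp01 : p 0 + p 1 < 1)
    (hsub : ∑' n : ℕ, (n : ℝ≥0∞) * p n < 1)
    (A : Set ℕ) (hpA : 0 < ∑' k : ℕ, (if k ∈ A then p k else 0)) :
    ∀ θ₁ θ₂ : ℝ≥0∞, memI p A θ₁ → memI p A θ₂ →
      meanA p A θ₁ = 1 → meanA p A θ₂ = 1 → θ₁ = θ₂ :=
  unique_critical_theta_general p hp0 hp01 A hpA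

end GWPaper
end
end
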